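/- Let Γ = (S₁,…,Sₙ, g, P) be a mechanism and, for each i, let φᵢ : S̄ᵢ → Sᵢ be a surjective map between bid sets. Define the mechanism Γ̄ = (S̄₁,…,S̄ₙ, g∘φ, P∘φ) where φ = (φ₁,…,φₙ). If ᾱ is a Bayesian equilibrium of Γ̄, then α* defined by αᵢ* = φᵢ ∘ ᾱᵢ is a Bayesian equilibrium of Γ, and moreover g∘α* = (g∘φ)∘ᾱ and P∘α* = (P∘φ)∘ᾱ. -/

import Mathlib

variable {n : ℕ}

def expUtil {X : Type} {Θ S : Fin n → Type} [∀ i, Fintype (Θ i)]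
    (V : Fin n → X → (∀ j, Θ j) → ℚ) (p : (∀ j, Θ j) → ℚ)
    (g : (∀ j, S j) → X) (P : (∀ j, S j) → Fin n → ℚ)
    (α : ∀ j, Θ j → S j) (i : Fin n) (t : Θ i) (s : S i) : ℚ :=
  ∑ θ : ∀ j, Θ j,
    p (Function.update θ i t) *
      (V i (g (Function.update (fun j => α j (θ j)) i s)) (Function.update θ i t) +
        P (Function.update (fun j => α j (θ j)) i s) i)

def isEquilibrium {X : Type} {Θ S : Fin n → Type} [∀ i, Fintype (Θ i)]
    (V : Fin n → X → (∀ j, Θ j) → ℚ) (p : (∀ j, Θ j) → ℚ)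
    (g : (∀ j, S j) → X) (P : (∀ j, S j) → Fin n → ℚ)
    (α : ∀ j, Θ j → S j) : Prop :=
  ∀ (i : Fin n) (t : Θ i) (s : S i),
    expUtil V p g P α i t s ≤ expUtil V p g P α i t (α i t)

section Pullback

variable {X : Type} {Θ S Sb : Fin n → Type} [∀ i, Fintype (Θ i)]
  (V : Fin n → X → (∀ j, Θ j) → ℚ) (p : (∀ j, Θ j) → ℚ)
  (g : (∀ j, S j) → X) (P : (∀ j, S j) → Fin n → ℚ) (φ : ∀ i, Sb i → S i)

theorem expUtil_comp (ab : ∀ j, Θ j → Sb j) (i : Fin n) (t : Θ i) (sb : Sb i) :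
    expUtil V p g P (fun i t => φ i (ab i t)) i t (φ i sb) =
      expUtil V p (fun s => g fun j => φ j (s j)) (fun s => P fun j => φ j (s j)) ab i t sb := by
  have hupdate : ∀ θ : ∀ j, Θ j,
      Function.update (fun j => φ j (ab j (θ j))) i (φ i sb) =
        fun j => φ j (Function.update (fun j => ab j (θ j)) i sb j) :=
    fun θ => funext fun j => (Function.apply_update φ _ i sb j).symm
  simp only [expUtil, hupdate]

theorem isEquilibrium_comp_of_surjective (hsurj : ∀ i, Function.Surjective (φ i))
    {ab : ∀ j, Θ j → Sb j}
    (heq : isEquilibrium V p (fun s => g fun j => φ j (s j)) (fun s => P fun j => φ j (s j)) ab) :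
    isEquilibrium V p g P (fun i t => φ i (ab i t)) := by
  intro i t s
  obtain ⟨sb, rfl⟩ := hsurj i s
  rw [expUtil_comp, expUtil_comp]
  exact heq i t sb

end Pullback

/-- Pulling back a mechanism along surjective maps `φᵢ : S̄ᵢ → Sᵢ` of bid sets: if `ᾱ` is a
Bayesian equilibrium of `Γ̄ = (S̄, g∘φ, P∘φ)`, then `α* = φ ∘ ᾱ` is a Bayesian equilibrium of
`Γ = (S, g, P)`, with `g∘α* = (g∘φ)∘ᾱ` and `P∘α* = (P∘φ)∘ᾱ`. -/
theorem pullback_equilibrium {X : Type} {Θ S Sb : Fin n → Type} [∀ i, Fintype (Θ i)]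
    (V : Fin n → X → (∀ j, Θ j) → ℚ) (p : (∀ j, Θ j) → ℚ)
    (g : (∀ j, S j) → X) (P : (∀ j, S j) → Fin n → ℚ)
    (φ : ∀ i, Sb i → S i) (hsurj : ∀ i, Function.Surjective (φ i))
    (ab : ∀ j, Θ j → Sb j)
    (heq : isEquilibrium V p (fun s : ∀ j, Sb j => g (fun j => φ j (s j)))
      (fun s : ∀ j, Sb j => P (fun j => φ j (s j))) ab) :
    isEquilibrium V p g P (fun i (t : Θ i) => φ i (ab i t)) ∧
      (fun θ : ∀ j, Θ j => g (fun j => φ j (ab j (θ j)))) =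
        (fun θ : ∀ j, Θ j => (fun s : ∀ j, Sb j => g (fun j => φ j (s j)))
          (fun j => ab j (θ j))) ∧
      (fun θ : ∀ j, Θ j => P (fun j => φ j (ab j (θ j)))) =
        (fun θ : ∀ j, Θ j => (fun s : ∀ j, Sb j => P (fun j => φ j (s j)))
          (fun j => ab j (θ j))) :=
  ⟨isEquilibrium_comp_of_surjective V p g P φ hsurj heq, rfl, rfl⟩
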